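/- arXiv:2006.04425 — 7 statements merged into one kernel-verified Lean document; each statement's English description precedes it below -/
import Mathlib

section
/- If two points p₁ = (x₁, y) and p₂ = (x₂, y) in ℝ² have the same second coordinate (i.e., are coaxial in direction (-1,0)) with x₁ < x₂ ≤ c - a for appropriate parameters, then there are infinitely many tropical lines passing through both points; specifically, every tropical line with vertex (v₁, y) satisfying v₁ ≥ x₂ contains both points. -/
/-- The half-ray from `v` in direction `d`. -/
def tropRay (v d : ℝ × ℝ) : Set (ℝ × ℝ) := {p | ∃ t : ℝ, 0 ≤ t ∧ p = v + t • d}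

/-- The tropical line with vertex `v`: the union of the three half-rays from `v` in the
directions `(-1,0)`, `(0,-1)` and `(1,1)`. -/
def tropLine (v : ℝ × ℝ) : Set (ℝ × ℝ) :=
  tropRay v (-1, 0) ∪ tropRay v (0, -1) ∪ tropRay v (1, 1)

theorem mem_tropLine_of_le {x v : ℝ} (y : ℝ) (hx : x ≤ v) : (x, y) ∈ tropLine (v, y) :=
  Or.inl <| Or.inl ⟨v - x, sub_nonneg.mpr hx, by simp⟩

/-- If `p₁ = (x₁,y)` and `p₂ = (x₂,y)` are coaxial in direction `(-1,0)` with `x₁ < x₂`,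
then every tropical line with vertex `(v₁, y)` with `v₁ ≥ x₂` contains both points, and
there are infinitely many tropical lines through both points. -/
theorem infinitely_many_lines_through_coaxial_points (x₁ x₂ y : ℝ) (h : x₁ < x₂) :
    (∀ v₁ : ℝ, x₂ ≤ v₁ → (x₁, y) ∈ tropLine (v₁, y) ∧ (x₂, y) ∈ tropLine (v₁, y)) ∧
      {v : ℝ × ℝ | (x₁, y) ∈ tropLine v ∧ (x₂, y) ∈ tropLine v}.Infinite := by
  have through_both : ∀ v₁ : ℝ, x₂ ≤ v₁ →
      (x₁, y) ∈ tropLine (v₁, y) ∧ (x₂, y) ∈ tropLine (v₁, y) := fun v₁ hv =>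
    ⟨mem_tropLine_of_le y (h.le.trans hv), mem_tropLine_of_le y hv⟩
  refine ⟨through_both, Set.Infinite.mono ?_ ((Set.Ici_infinite x₂).image
    (Prod.mk_left_injective y).injOn)⟩
  rintro _ ⟨v₁, hv, rfl⟩
  exact through_both v₁ hv
end

section
/- If two points p₁, p₂ ∈ ℝ² are not coaxial (do not lie on a common ray of any tropical line through them), then there is a unique tropical line passing through both, and this line is stable. -/
/-- The three primitive ray directions of a tropical line. -/
def tropDirs : Set (ℝ × ℝ) := {(-1, 0), (0, -1), (1, 1)}

/-- Two points are coaxial if they lie on the same half-ray (axis) of some tropical line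
containing them both. -/
def Coaxial (p q : ℝ × ℝ) : Prop :=
  ∃ v : ℝ × ℝ, p ∈ tropLine v ∧ q ∈ tropLine v ∧
    ∃ d ∈ tropDirs, p ∈ tropRay v d ∧ q ∈ tropRay v d

/-- A stable tropical line through `p₁, p₂`. -/
def StableThrough (p₁ p₂ v : ℝ × ℝ) : Prop :=
  p₁ ∈ tropLine v ∧ p₂ ∈ tropLine v ∧
    ((∀ w : ℝ × ℝ, p₁ ∈ tropLine w ∧ p₂ ∈ tropLine w → w = v) ∨ v = p₁ ∨ v = p₂)

/-! The vertex of the line through `a` and `b` is read off the max-plus cross product of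
`(0, a.1, a.2)` and `(0, b.1, b.2)`. If `a` and `b` lie on different rays of a line `w`, that
formula returns `w`; non-coaxial points never share a ray, so every line through them has
this vertex. -/

theorem mem_tropRay_neg_one_zero {v p : ℝ × ℝ} :
    p ∈ tropRay v (-1, 0) ↔ p.1 ≤ v.1 ∧ p.2 = v.2 := by
  constructor
  · rintro ⟨t, ht, rfl⟩
    simpa using ht
  · rintro ⟨h1, h2⟩
    exact ⟨v.1 - p.1, by linarith, Prod.ext (by simp) (by simp [h2])⟩

theorem mem_tropRay_zero_neg_one {v p : ℝ × ℝ} :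
    p ∈ tropRay v (0, -1) ↔ p.1 = v.1 ∧ p.2 ≤ v.2 := by
  constructor
  · rintro ⟨t, ht, rfl⟩
    simpa using ht
  · rintro ⟨h1, h2⟩
    exact ⟨v.2 - p.2, by linarith, Prod.ext (by simp [h1]) (by simp)⟩

theorem mem_tropRay_one_one {v p : ℝ × ℝ} :
    p ∈ tropRay v (1, 1) ↔ v.1 ≤ p.1 ∧ p.1 - v.1 = p.2 - v.2 := by
  constructor
  · rintro ⟨t, ht, rfl⟩
    simpa using ht
  · rintro ⟨h1, h2⟩
    exact ⟨p.1 - v.1, by linarith, Prod.ext (by simp) (by simp [h2])⟩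

theorem mem_tropLine_iff {v p : ℝ × ℝ} : p ∈ tropLine v ↔
    (p.1 ≤ v.1 ∧ p.2 = v.2) ∨ (p.1 = v.1 ∧ p.2 ≤ v.2) ∨ (v.1 ≤ p.1 ∧ p.1 - v.1 = p.2 - v.2) := by
  simp only [tropLine, Set.mem_union, mem_tropRay_neg_one_zero, mem_tropRay_zero_neg_one,
    mem_tropRay_one_one, or_assoc]

theorem mem_tropLine_iff_exists_mem_tropRay {v p : ℝ × ℝ} :
    p ∈ tropLine v ↔ ∃ d ∈ tropDirs, p ∈ tropRay v d := by
  simp [tropLine, tropDirs, or_assoc]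

/-- `tropLine v` is the corner locus of `max (x - v.1) (y - v.2) 0`; dehomogenising the
cross product `(c₀, c₁, c₂)` of the two points gives `v = (c₀ - c₁, c₀ - c₂)`. -/
def tropVertex (a b : ℝ × ℝ) : ℝ × ℝ :=
  (max (a.1 + b.2) (a.2 + b.1) - max a.2 b.2, max (a.1 + b.2) (a.2 + b.1) - max a.1 b.1)

theorem tropVertex_comm (a b : ℝ × ℝ) : tropVertex a b = tropVertex b a := by
  simp only [tropVertex, max_comm, add_comm]

theorem left_mem_tropLine_tropVertex (a b : ℝ × ℝ) : a ∈ tropLine (tropVertex a b) := by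
  rw [mem_tropLine_iff]
  simp only [tropVertex, max_def]
  split_ifs <;> grind

theorem right_mem_tropLine_tropVertex (a b : ℝ × ℝ) : b ∈ tropLine (tropVertex a b) :=
  tropVertex_comm a b ▸ left_mem_tropLine_tropVertex b a

theorem tropVertex_eq_of_mem_tropRay {w a b d e : ℝ × ℝ} (hd : d ∈ tropDirs) (he : e ∈ tropDirs)
    (hde : d ≠ e) (ha : a ∈ tropRay w d) (hb : b ∈ tropRay w e) : tropVertex a b = w := by
  obtain ⟨s, hs, rfl⟩ := ha
  obtain ⟨t, ht, rfl⟩ := hb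
  rcases hd with rfl | rfl | rfl <;> rcases he with rfl | rfl | rfl <;>
    first
    | exact absurd rfl hde
    | (ext <;>
        simp only [tropVertex, max_def, Prod.fst_add, Prod.snd_add, Prod.smul_mk, smul_eq_mul,
          mul_one, mul_zero, mul_neg] <;>
        split_ifs <;> linarith)

theorem eq_tropVertex_of_not_coaxial {w a b : ℝ × ℝ} (h : ¬ Coaxial a b) (ha : a ∈ tropLine w)
    (hb : b ∈ tropLine w) : w = tropVertex a b := by
  obtain ⟨d, hd, had⟩ := mem_tropLine_iff_exists_mem_tropRay.1 ha
  obtain ⟨e, he, hbe⟩ := mem_tropLine_iff_exists_mem_tropRay.1 hb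
  have hde : d ≠ e := by
    rintro rfl
    exact h ⟨w, ha, hb, d, hd, had, hbe⟩
  exact (tropVertex_eq_of_mem_tropRay hd he hde had hbe).symm

/-- If two points are not coaxial, there is a unique tropical line through both,
and this line is stable. -/
theorem unique_line_through_non_coaxial (p₁ p₂ : ℝ × ℝ) (h : ¬ Coaxial p₁ p₂) :
    ∃ v : ℝ × ℝ, (p₁ ∈ tropLine v ∧ p₂ ∈ tropLine v) ∧
      (∀ w : ℝ × ℝ, p₁ ∈ tropLine w ∧ p₂ ∈ tropLine w → w = v) ∧
      StableThrough p₁ p₂ v := by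
  have hmem : p₁ ∈ tropLine (tropVertex p₁ p₂) ∧ p₂ ∈ tropLine (tropVertex p₁ p₂) :=
    ⟨left_mem_tropLine_tropVertex p₁ p₂, right_mem_tropLine_tropVertex p₁ p₂⟩
  have huniq : ∀ w : ℝ × ℝ, p₁ ∈ tropLine w ∧ p₂ ∈ tropLine w → w = tropVertex p₁ p₂ :=
    fun _ hw => eq_tropVertex_of_not_coaxial h hw.1 hw.2
  exact ⟨_, hmem, huniq, hmem.1, hmem.2, Or.inl huniq⟩
end

section
/- (Classical de Bruijn–Erdős, inequality part) Let (X, B) be a finite linear space: X a finite set of 'points', B a family of proper subsets ('lines') of X each of cardinality at least 2, such that every pair of distinct points lies in exactly one line. If |B| > 1, then |B| ≥ |X|. -/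
/-!
Suppose `#B < #X`. Weight each pair `(l, p)` with `p ∉ l` once by `1 / (#B * #lᶜ)` and once by
`1 / (#X * (#B - r p))`, where `r p` is the number of lines through `p`; each weighting sums
to `1`. But `#l ≤ r p` whenever `p ∉ l`, as the lines joining `p` to the points of `l` are
distinct, and with `#B < #X` this makes the second weight strictly larger on every pair.
-/

open Finset

theorem Finset.sum_sum_inv_card_mul_card {ι κ : Type*} {s : Finset ι} (hs : s.Nonempty)
    (t : ι → Finset κ) (ht : ∀ i ∈ s, (t i).Nonempty) :
    ∑ i ∈ s, ∑ _j ∈ t i, ((#s : ℚ) * #(t i))⁻¹ = 1 := by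
  have hs₀ : (#s : ℚ) ≠ 0 := by exact_mod_cast hs.card_pos.ne'
  calc ∑ i ∈ s, ∑ _j ∈ t i, ((#s : ℚ) * #(t i))⁻¹
      = ∑ _i ∈ s, (#s : ℚ)⁻¹ := sum_congr rfl fun i hi => by
        have : (#(t i) : ℚ) ≠ 0 := by exact_mod_cast (ht i hi).card_pos.ne'
        rw [sum_const, nsmul_eq_mul]
        field_simp
    _ = 1 := by rw [sum_const, nsmul_eq_mul, mul_inv_cancel₀ hs₀]

namespace LinearSpace

variable {α : Type*} [DecidableEq α] {B : Finset (Finset α)}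

theorem card_le_card_filter_mem
    (hunique : ∀ p q : α, p ≠ q → ∃! l, l ∈ B ∧ p ∈ l ∧ q ∈ l)
    {l : Finset α} {p : α} (hl : l ∈ B) (hp : p ∉ l) :
    #l ≤ #{l' ∈ B | p ∈ l'} := by
  refine card_le_card_of_forall_subsingleton (fun q l' => q ∈ l') (fun q hq => ?_) ?_
  · obtain ⟨l', ⟨hl', hpl', hql'⟩, -⟩ := hunique p q (ne_of_mem_of_not_mem hq hp).symm
    exact ⟨l', mem_filter.2 ⟨hl', hpl'⟩, hql'⟩
  · rintro l' hl' q ⟨hql, hql'⟩ q' ⟨hq'l, hq'l'⟩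
    by_contra hqq'
    obtain ⟨hl'B, hpl'⟩ := mem_filter.1 hl'
    have : l' = l := (hunique q q' hqq').unique ⟨hl'B, hql', hq'l'⟩ ⟨hl, hql, hq'l⟩
    exact hp (this ▸ hpl')

variable [Fintype α]

theorem exists_notMem (hunique : ∀ p q : α, p ≠ q → ∃! l, l ∈ B ∧ p ∈ l ∧ q ∈ l)
    (hproper : ∀ l ∈ B, l ≠ univ) (htwo : ∀ l ∈ B, 2 ≤ #l)
    (hB : B.Nonempty) (p : α) : ∃ l ∈ B, p ∉ l := by
  obtain ⟨l, hl⟩ := hB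
  by_cases hpl : p ∈ l
  swap
  · exact ⟨l, hl, hpl⟩
  obtain ⟨a, hal, hap⟩ := exists_mem_ne (htwo l hl) p
  obtain ⟨q, hql⟩ : ∃ q, q ∉ l := by simpa [eq_univ_iff_forall] using hproper l hl
  obtain ⟨l', ⟨hl', hal', hql'⟩, -⟩ := hunique a q (ne_of_mem_of_not_mem hal hql)
  -- the line through `a` and `p` is `l`, which misses `q`
  refine ⟨l', hl', fun hpl' => hql ?_⟩
  rwa [(hunique a p hap).unique ⟨hl', hal', hpl'⟩ ⟨hl, hal, hpl⟩] at hql'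

theorem card_mul_card_filter_notMem_lt
    (hunique : ∀ p q : α, p ≠ q → ∃! l, l ∈ B ∧ p ∈ l ∧ q ∈ l)
    (htwo : ∀ l ∈ B, 2 ≤ #l) (hlt : #B < Fintype.card α)
    {l : Finset α} {p : α} (hl : l ∈ B) (hp : p ∉ l) :
    Fintype.card α * #{l' ∈ B | p ∉ l'} < #B * #lᶜ := by
  have hk := htwo l hl
  have hr := card_le_card_filter_mem hunique hl hp
  have hB := card_filter_add_card_filter_not (s := B) (p ∈ ·)
  have hα := card_add_card_compl l
  nlinarith

end LinearSpace

open LinearSpace in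
/-- **de Bruijn–Erdős theorem, inequality part.** In a finite linear space `(X, B)`
(every line is a proper subset of `X` of size at least two, and every pair of distinct
points lies on a unique line) with more than one line, the number of lines is at least
the number of points. -/
theorem deBruijn_Erdos_card (α : Type*) [Fintype α] [DecidableEq α]
    (B : Finset (Finset α))
    (hproper : ∀ l ∈ B, l ≠ Finset.univ)
    (htwo : ∀ l ∈ B, 2 ≤ l.card)
    (hunique : ∀ p q : α, p ≠ q → ∃! l, l ∈ B ∧ p ∈ l ∧ q ∈ l)
    (hB : 1 < B.card) :
    Fintype.card α ≤ B.card := by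
  by_contra! hlt
  have hBne : B.Nonempty := card_pos.1 (by omega)
  have hcompl (l) (hl : l ∈ B) : lᶜ.Nonempty := by
    rw [nonempty_iff_ne_empty, Ne, compl_eq_empty_iff]
    exact hproper l hl
  have key : (1 : ℚ) < 1 := calc
    (1 : ℚ) = ∑ l ∈ B, ∑ _p ∈ lᶜ, ((#B : ℚ) * #lᶜ)⁻¹ :=
      (sum_sum_inv_card_mul_card hBne _ hcompl).symm
    _ < ∑ l ∈ B, ∑ p ∈ lᶜ, ((Fintype.card α : ℚ) * #{l' ∈ B | p ∉ l'})⁻¹ := by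
      refine sum_lt_sum_of_nonempty hBne fun l hl => sum_lt_sum_of_nonempty (hcompl l hl)
        fun p hp => ?_
      have hp : p ∉ l := mem_compl.1 hp
      have hpos : 0 < Fintype.card α * #{l' ∈ B | p ∉ l'} :=
        Nat.mul_pos (by omega) (card_pos.2 ⟨l, mem_filter.2 ⟨hl, hp⟩⟩)
      rw [inv_lt_inv₀ (by positivity) (by exact_mod_cast hpos)]
      exact_mod_cast card_mul_card_filter_notMem_lt hunique htwo hlt hl hp
    _ = ∑ p, ∑ l ∈ {l ∈ B | p ∉ l},
          ((Fintype.card α : ℚ) * #{l' ∈ B | p ∉ l'})⁻¹ :=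
      sum_comm' fun l p => by simp only [mem_compl, mem_filter, mem_univ]; tauto
    _ = 1 := by
      rw [← card_univ]
      have hα : (univ : Finset α).Nonempty :=
        univ_nonempty_iff.2 (Fintype.card_pos_iff.1 (by omega))
      refine sum_sum_inv_card_mul_card hα _ fun p _ => ?_
      obtain ⟨l, hl, hp⟩ := exists_notMem hunique hproper htwo hBne p
      exact ⟨l, mem_filter.2 ⟨hl, hp⟩⟩
  exact lt_irrefl _ key
end

section
/- In a finite linear space (X, B) with |B| = |X| > 1, any two distinct lines of B intersect in a common point. -/
/-!
Regard the members of `B` as lines and the elements of `α` as points. Two points span a unique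
line, so this incidence structure is a nondegenerate configuration in which every two points are
joined by a line. In such a configuration with as many lines as points, every two lines also
meet (`Configuration.HasLines.hasPoints`, a counting argument going back to de Bruijn and Erdős).
-/

namespace Finset

variable {α : Type*}

instance (B : Finset (Finset α)) : Membership α B := ⟨fun l p => p ∈ (l : Finset α)⟩

structure IsLinearSpace (B : Finset (Finset α)) : Prop where
  exists_notMem : ∀ l ∈ B, ∃ p, p ∉ l
  two_le_card : ∀ l ∈ B, 2 ≤ l.card
  existsUnique_line : ∀ p q : α, p ≠ q → ∃! l, l ∈ B ∧ p ∈ l ∧ q ∈ l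

namespace IsLinearSpace

variable {B : Finset (Finset α)}

theorem eq_of_mem_of_mem (hL : IsLinearSpace B) {p q : α} (hpq : p ≠ q) {l₁ l₂ : Finset α}
    (hl₁ : l₁ ∈ B) (hp₁ : p ∈ l₁) (hq₁ : q ∈ l₁)
    (hl₂ : l₂ ∈ B) (hp₂ : p ∈ l₂) (hq₂ : q ∈ l₂) : l₁ = l₂ :=
  (hL.existsUnique_line p q hpq).unique ⟨hl₁, hp₁, hq₁⟩ ⟨hl₂, hp₂, hq₂⟩

/-- If `p` lies on a line `l₀`, the line through a point `r ∉ l₀` and a second point `s` of `l₀`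
misses `p`. -/
theorem exists_line_notMem (hL : IsLinearSpace B) (hB : B.Nonempty) (p : α) : ∃ l ∈ B, p ∉ l := by
  obtain ⟨l₀, hl₀⟩ := hB
  by_cases hp : p ∈ l₀
  swap
  · exact ⟨l₀, hl₀, hp⟩
  obtain ⟨r, hr⟩ := hL.exists_notMem l₀ hl₀
  obtain ⟨s, hs, hsp⟩ := Finset.exists_mem_ne (hL.two_le_card l₀ hl₀) p
  have hrs : r ≠ s := fun h => hr (h ▸ hs)
  obtain ⟨l, ⟨hl, hrl, hsl⟩, -⟩ := hL.existsUnique_line r s hrs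
  refine ⟨l, hl, fun hpl => hr ?_⟩
  rwa [hL.eq_of_mem_of_mem hsp.symm hl hpl hsl hl₀ hp hs] at hrl

theorem nondegenerate (hL : IsLinearSpace B) (hB : B.Nonempty) : Configuration.Nondegenerate α B where
  exists_point l := hL.exists_notMem l l.2
  exists_line p := by
    obtain ⟨l, hl, hp⟩ := hL.exists_line_notMem hB p
    exact ⟨⟨l, hl⟩, hp⟩
  eq_or_eq {p q l₁ l₂} hp₁ hq₁ hp₂ hq₂ :=
    or_iff_not_imp_left.2 fun hpq =>
      Subtype.ext (hL.eq_of_mem_of_mem hpq l₁.2 hp₁ hq₁ l₂.2 hp₂ hq₂)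

@[reducible]
noncomputable def hasLines (hL : IsLinearSpace B) (hB : B.Nonempty) : Configuration.HasLines α B where
  toNondegenerate := hL.nondegenerate hB
  mkLine h := ⟨_, (hL.existsUnique_line _ _ h).exists.choose_spec.1⟩
  mkLine_ax h := (hL.existsUnique_line _ _ h).exists.choose_spec.2

theorem exists_mem_mem_of_card_eq [Fintype α] (hL : IsLinearSpace B)
    (hcard : B.card = Fintype.card α)
    {l₁ l₂ : Finset α} (hl₁ : l₁ ∈ B) (hl₂ : l₂ ∈ B) (hne : l₁ ≠ l₂) :
    ∃ p, p ∈ l₁ ∧ p ∈ l₂ := by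
  let := hL.hasLines ⟨l₁, hl₁⟩
  have hP := Configuration.HasLines.hasPoints (P := α) (L := B) (by simp [hcard])
  exact ⟨_, hP.mkPoint_ax (l₁ := ⟨l₁, hl₁⟩) (l₂ := ⟨l₂, hl₂⟩) (by simpa using hne)⟩

end IsLinearSpace

end Finset

theorem deBruijn_Erdos_equality_case_general (α : Type*) [Fintype α]
    (B : Finset (Finset α))
    (hproper : ∀ l ∈ B, l ≠ Finset.univ)
    (htwo : ∀ l ∈ B, 2 ≤ l.card)
    (hunique : ∀ p q : α, p ≠ q → ∃! l, l ∈ B ∧ p ∈ l ∧ q ∈ l)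
    (heq : B.card = Fintype.card α) :
    ∀ l₁ ∈ B, ∀ l₂ ∈ B, l₁ ≠ l₂ → ∃ p : α, p ∈ l₁ ∧ p ∈ l₂ := by
  have hL : B.IsLinearSpace :=
    { exists_notMem := fun l hl => by
        simpa [Finset.eq_univ_iff_forall] using hproper l hl
      two_le_card := htwo
      existsUnique_line := hunique }
  intro l₁ hl₁ l₂ hl₂ hne
  exact hL.exists_mem_mem_of_card_eq heq hl₁ hl₂ hne

/-- In a finite linear space `(X, B)` with `|B| = |X| > 1`, any two distinct lines meet in a
common point. -/
theorem deBruijn_Erdos_equality_case (α : Type*) [Fintype α] [DecidableEq α]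
    (B : Finset (Finset α))
    (hproper : ∀ l ∈ B, l ≠ Finset.univ)
    (htwo : ∀ l ∈ B, 2 ≤ l.card)
    (hunique : ∀ p q : α, p ≠ q → ∃! l, l ∈ B ∧ p ∈ l ∧ q ∈ l)
    (hB : 1 < B.card)
    (heq : B.card = Fintype.card α) :
    ∀ l₁ ∈ B, ∀ l₂ ∈ B, l₁ ≠ l₂ → ∃ p : α, p ∈ l₁ ∧ p ∈ l₂ :=
  deBruijn_Erdos_equality_case_general α B hproper htwo hunique heq
end

section
/- The map sending a point P ∈ ℝ² to the tropical line with vertex −P is incidence-reversing: for points P, Q ∈ ℝ², P lies on the tropical line with vertex −Q if and only if Q lies on the tropical line with vertex −P. -/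
lemma tropRay_symm (P Q d : ℝ × ℝ) : P ∈ tropRay (-Q) d ↔ Q ∈ tropRay (-P) d := by
  constructor <;> rintro ⟨t, ht, h⟩ <;> exact ⟨t, ht, by rw [h]; abel⟩

/-- Tropical projective duality (sending a point `P` to the tropical line with vertex `-P`)
preserves incidence: `P` lies on the line dual to `Q` iff `Q` lies on the line dual to `P`. -/
theorem tropical_duality_incidence (P Q : ℝ × ℝ) :
    P ∈ tropLine (-Q) ↔ Q ∈ tropLine (-P) := by
  unfold tropLine
  rw [Set.mem_union, Set.mem_union, Set.mem_union, Set.mem_union,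
    tropRay_symm P Q, tropRay_symm P Q, tropRay_symm P Q]
end

section
/- Let t be the total number of faces in the dual Newton subdivision of an arrangement of n distinct tropical lines in ℝ². Then n ≤ t ≤ n(n-1)/2 + n. -/
/-- The vertices of the tropical line arrangement with line vertices `v i`: points lying on
two rays of the arrangement with distinct directions.  These are exactly the points dual to
the (2-dimensional) faces of the dual Newton subdivision of the arrangement. -/
def arrVertices (n : ℕ) (v : Fin n → ℝ × ℝ) : Set (ℝ × ℝ) :=
  {p | ∃ i j : Fin n, ∃ d ∈ tropDirs, ∃ d' ∈ tropDirs,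
    d ≠ d' ∧ p ∈ tropRay (v i) d ∧ p ∈ tropRay (v j) d'}

/-! Every vertex of the arrangement is a crossing of a ray of line `i` with a ray of line `j` in a
different direction, and two tropical lines (or one line with itself) have at most one such
crossing. Hence the vertices are covered by `(n + 1).choose 2` subsingletons indexed by unordered
pairs `{i, j}`, while the `n` distinct line vertices are themselves vertices of the arrangement. -/

theorem Set.ncard_le_card_of_subset_iUnion_subsingleton {α ι : Type*} [Fintype ι]
    {s : Set α} {S : ι → Set α} (hS : ∀ i, (S i).Subsingleton) (hs : s ⊆ ⋃ i, S i) :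
    s.Finite ∧ s.ncard ≤ Fintype.card ι := by
  have hfin : (⋃ i, S i).Finite := Set.finite_iUnion fun i => (hS i).finite
  refine ⟨hfin.subset hs, ?_⟩
  calc s.ncard ≤ (⋃ i, S i).ncard := Set.ncard_le_ncard hs hfin
    _ ≤ ∑ i, (S i).ncard := Set.ncard_iUnion_le_of_fintype S
    _ ≤ ∑ _i : ι, 1 := Finset.sum_le_sum fun i _ =>
      (Set.ncard_le_one_iff (hS i).finite).2 fun ha hb => hS i ha hb
    _ = Fintype.card ι := by simp

theorem Nat.choose_succ_two (n : ℕ) : (n + 1).choose 2 = n * (n - 1) / 2 + n := by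
  rw [Nat.choose_succ_succ', Nat.choose_one_right, Nat.choose_two_right, add_comm]

def tropCrossings (a b : ℝ × ℝ) : Set (ℝ × ℝ) :=
  {p | ∃ d ∈ tropDirs, ∃ d' ∈ tropDirs, d ≠ d' ∧ p ∈ tropRay a d ∧ p ∈ tropRay b d'}

theorem tropCrossings_comm (a b : ℝ × ℝ) : tropCrossings a b = tropCrossings b a := by
  ext p
  constructor <;> rintro ⟨d, hd, d', hd', hne, ha, hb⟩ <;> exact ⟨d', hd', d, hd, hne.symm, hb, ha⟩

theorem mem_tropDirs {d : ℝ × ℝ} : d ∈ tropDirs ↔ d = (-1, 0) ∨ d = (0, -1) ∨ d = (1, 1) :=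
  Iff.rfl

theorem mem_tropRay {v d p : ℝ × ℝ} :
    p ∈ tropRay v d ↔ ∃ t : ℝ, 0 ≤ t ∧ p.1 = v.1 + t * d.1 ∧ p.2 = v.2 + t * d.2 := by
  simp [tropRay, Prod.ext_iff]

/- Each of the six ordered pairs of distinct directions yields a crossing only when `b - a` lies
in a certain closed cone, e.g. `{c | c.1 ≤ 0 ≤ c.2}` for `((-1, 0), (0, -1))`. These cones tile
the plane and overlap only along boundary rays, where the candidate crossings agree. -/
theorem tropCrossings_subsingleton (a b : ℝ × ℝ) : (tropCrossings a b).Subsingleton := by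
  rintro p ⟨d, hd, d', hd', hne, hpa, hpb⟩ q ⟨e, he, e', he', hne', hqa, hqb⟩
  obtain ⟨t₁, ht₁, hp₁, hp₂⟩ := mem_tropRay.1 hpa
  obtain ⟨s₁, hs₁, hp₃, hp₄⟩ := mem_tropRay.1 hpb
  obtain ⟨t₂, ht₂, hq₁, hq₂⟩ := mem_tropRay.1 hqa
  obtain ⟨s₂, hs₂, hq₃, hq₄⟩ := mem_tropRay.1 hqb
  refine Prod.ext ?_ ?_ <;>
  rcases mem_tropDirs.1 hd with rfl | rfl | rfl <;>
  rcases mem_tropDirs.1 hd' with rfl | rfl | rfl <;>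
  rcases mem_tropDirs.1 he with rfl | rfl | rfl <;>
  rcases mem_tropDirs.1 he' with rfl | rfl | rfl <;>
  simp only [ne_eq, not_true_eq_false] at hne hne' <;>
  norm_num at hp₁ hp₂ hp₃ hp₄ hq₁ hq₂ hq₃ hq₄ <;>
  linarith

theorem self_mem_tropCrossings (a : ℝ × ℝ) : a ∈ tropCrossings a a :=
  ⟨(-1, 0), by simp [tropDirs], (0, -1), by simp [tropDirs], by norm_num,
    ⟨0, le_rfl, by simp⟩, ⟨0, le_rfl, by simp⟩⟩

section Arrangement

variable {n : ℕ} (v : Fin n → ℝ × ℝ)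

def pairCrossings : Sym2 (Fin n) → Set (ℝ × ℝ) :=
  Sym2.lift ⟨fun i j => tropCrossings (v i) (v j), fun _ _ => tropCrossings_comm _ _⟩

theorem pairCrossings_subsingleton (z : Sym2 (Fin n)) : (pairCrossings v z).Subsingleton :=
  z.ind fun i j => tropCrossings_subsingleton (v i) (v j)

theorem arrVertices_subset_iUnion_pairCrossings : arrVertices n v ⊆ ⋃ z, pairCrossings v z := by
  rintro p ⟨i, j, hp⟩
  exact Set.mem_iUnion.2 ⟨s(i, j), hp⟩

theorem range_subset_arrVertices : Set.range v ⊆ arrVertices n v := by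
  rintro _ ⟨i, rfl⟩
  exact ⟨i, i, self_mem_tropCrossings (v i)⟩

end Arrangement

/-- The total number `t` of faces of the dual Newton subdivision of an arrangement of `n`
distinct tropical lines (equivalently, the number of vertices of the arrangement) satisfies
`n ≤ t ≤ n(n-1)/2 + n`. -/
theorem face_count_bounds (n : ℕ) (v : Fin n → ℝ × ℝ) (hv : Function.Injective v) :
    n ≤ (arrVertices n v).ncard ∧ (arrVertices n v).ncard ≤ n * (n - 1) / 2 + n := by
  obtain ⟨hfin, hle⟩ := Set.ncard_le_card_of_subset_iUnion_subsingleton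
    (pairCrossings_subsingleton v) (arrVertices_subset_iUnion_pairCrossings v)
  constructor
  · calc n = (Set.range v).ncard := by rw [Set.ncard_range_of_injective hv, Nat.card_fin]
      _ ≤ (arrVertices n v).ncard := Set.ncard_le_ncard (range_subset_arrVertices v) hfin
  · rwa [Sym2.card, Fintype.card_fin, Nat.choose_succ_two] at hle
end

section
/- Let L be an arrangement of n distinct tropical lines whose dual Newton subdivision has exactly n faces. Then the arrangement has no stable intersection of first kind (no stable intersection point at which no vertex of any line of the arrangement is located). -/
def stableIntersections (n : ℕ) (v : Fin n → ℝ × ℝ) : Set (ℝ × ℝ) :=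
  {p | ∃ i j : Fin n, i ≠ j ∧ ∃ d ∈ tropDirs, ∃ d' ∈ tropDirs,
    d ≠ d' ∧ p ∈ tropRay (v i) d ∧ p ∈ tropRay (v j) d'}

theorem mem_tropRay_self (v d : ℝ × ℝ) : v ∈ tropRay v d :=
  ⟨0, le_rfl, by simp⟩

theorem vertex_mem_arrVertices {n : ℕ} (v : Fin n → ℝ × ℝ) (k : Fin n) :
    v k ∈ arrVertices n v :=
  ⟨k, k, (-1, 0), by simp [tropDirs], (0, -1), by simp [tropDirs],
    by norm_num [Prod.ext_iff], mem_tropRay_self _ _, mem_tropRay_self _ _⟩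

theorem stableIntersections_subset_arrVertices {n : ℕ} (v : Fin n → ℝ × ℝ) :
    stableIntersections n v ⊆ arrVertices n v := by
  rintro p ⟨i, j, -, hij⟩
  exact ⟨i, j, hij⟩

/-- If an arrangement of `n` distinct tropical lines has exactly `n` faces in its dual Newton
subdivision, then it has no stable intersection of first kind, i.e. every stable intersection
point carries the vertex of some line of the arrangement. -/
theorem no_first_kind_of_n_faces (n : ℕ) (v : Fin n → ℝ × ℝ)
    (hv : Function.Injective v) (hfaces : (arrVertices n v).ncard = n) :
    ¬ ∃ p ∈ stableIntersections n v, ∀ i : Fin n, p ≠ v i := by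
  rintro ⟨p, hp, hpv⟩
  have hfin : (arrVertices n v).Finite := by
    obtain ⟨i, -⟩ := hp
    exact Set.finite_of_ncard_pos (hfaces.symm ▸ i.pos)
  have hp_new : p ∉ Set.range v := by
    rintro ⟨k, rfl⟩
    exact hpv k rfl
  have hsub : insert p (Set.range v) ⊆ arrVertices n v :=
    Set.insert_subset (stableIntersections_subset_arrVertices v hp)
      (Set.range_subset_iff.2 (vertex_mem_arrVertices v))
  have hcard := Set.ncard_le_ncard hsub hfin
  rw [Set.ncard_insert_of_notMem hp_new, Set.ncard_range_of_injective hv, Nat.card_fin,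
    hfaces] at hcard
  omega
end
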